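/- arXiv:1104.4680 — 2 statements merged into one kernel-verified Lean document; each statement's English description precedes it below -/
import Mathlib

section
/- Let X₁, …, Xₙ be jointly distributed random variables with values in [k] = {1, …, k} on a finite probability space, and suppose Var X_{ia} > 0 for all i ∈ [n] and a ∈ [k]. Then there exist vectors v₁, …, vₙ in a real inner product space with ‖v_i‖ ≤ 1 for all i, such that for all i, j ∈ [n] and every permutation π of [k]: (Σ_{a∈[k]} |Cov(X_{ia}, X_{j,π(a)})|)⁴ ≤ ⟨v_i, v_j⟩ ≤ Σ_{(a,b)∈[k]²} (1/2)·(1/Var X_{ia} + 1/Var X_{jb})·Cov(X_{ia}, X_{jb})². -/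
open Finset RealInnerProductSpace

noncomputable section

variable {Ω : Type*} [Fintype Ω]

/-- Expectation of a real random variable `f` under the weight function `p`. -/
def pExp (p : Ω → ℝ) (f : Ω → ℝ) : ℝ := ∑ ω, p ω * f ω

/-- Variance of a real random variable under `p`. -/
def pVar (p : Ω → ℝ) (f : Ω → ℝ) : ℝ := pExp p (fun ω => (f ω - pExp p f) ^ 2)

/-- Covariance of two real random variables under `p`. -/
def pCov (p : Ω → ℝ) (f g : Ω → ℝ) : ℝ :=
  pExp p (fun ω => (f ω - pExp p f) * (g ω - pExp p g))

/-- The `{0,1}`-indicator of the event `X = a`. -/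
def pInd {k : ℕ} (X : Ω → Fin k) (a : Fin k) : Ω → ℝ := fun ω => if X ω = a then 1 else 0

/-!
Let `c_{ia}` be the centred indicator of `X_i = a`, viewed in `L²(p)`, and `σ_{ia} = √Var X_{ia}`,
so that `Cov(X_{ia}, X_{jb}) = ⟪c_{ia}, c_{jb}⟫`. The vectors `w_i = ∑_a σ_{ia}⁻¹ c_{ia} ⊗ c_{ia}`
satisfy `⟪w_i, w_j⟫ = ∑_{a,b} Cov(X_{ia}, X_{jb})² / (σ_{ia} σ_{jb})`, and the Gram matrix of any
`n` vectors is that of `n` vectors of `ℝⁿ`. The upper bound is AM–GM on `1 / (σ_{ia} σ_{jb})`.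
For the lower bound, `∑_a |Cov(X_{ia}, X_{j,π a})| ≤ ∑_a σ_{ia} σ_{j,π a} ≤ 1` because
`∑_a Var X_{ia} ≤ 1`, and a weighted Cauchy–Schwarz bounds its square by `⟪w_i, w_j⟫`.
Finally `‖w_i‖ ≤ 1` is a computation with the covariance matrix `diag μ - μ μᵀ` of a single
categorical variable, closed by Sedrakyan's inequality.
-/

section Covariance

variable (p : Ω → ℝ)

def centeredVec (f : Ω → ℝ) : EuclideanSpace ℝ Ω :=
  WithLp.toLp 2 fun ω => √(p ω) * (f ω - pExp p f)

variable {p}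

lemma inner_centeredVec (hp : ∀ ω, 0 ≤ p ω) (f g : Ω → ℝ) :
    ⟪centeredVec p f, centeredVec p g⟫ = pCov p f g := by
  simp only [centeredVec, EuclideanSpace.inner_toLp_toLp, dotProduct, star_trivial]
  refine Finset.sum_congr rfl fun ω _ => ?_
  linear_combination ((f ω - pExp p f) * (g ω - pExp p g)) * Real.mul_self_sqrt (hp ω)

lemma pCov_self (f : Ω → ℝ) : pCov p f f = pVar p f := by
  simp only [pCov, pVar, sq]

lemma abs_pCov_le (hp : ∀ ω, 0 ≤ p ω) (f g : Ω → ℝ) :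
    |pCov p f g| ≤ √(pVar p f) * √(pVar p g) := by
  simpa only [inner_centeredVec hp, norm_eq_sqrt_real_inner, pCov_self]
    using abs_real_inner_le_norm (centeredVec p f) (centeredVec p g)

lemma pCov_eq_pExp_mul_sub (hsum : ∑ ω, p ω = 1) (f g : Ω → ℝ) :
    pCov p f g = pExp p (fun ω => f ω * g ω) - pExp p f * pExp p g := by
  show ∑ ω, p ω * ((f ω - pExp p f) * (g ω - pExp p g)) = _
  have hf : ∑ ω, p ω * f ω = pExp p f := rfl
  have hg : ∑ ω, p ω * g ω = pExp p g := rfl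
  generalize pExp p f = mf at hf ⊢
  generalize pExp p g = mg at hg ⊢
  calc ∑ ω, p ω * ((f ω - mf) * (g ω - mg))
      = ∑ ω, p ω * (f ω * g ω) - mf * ∑ ω, p ω * g ω - mg * ∑ ω, p ω * f ω
          + mf * mg * ∑ ω, p ω := by
        simp only [Finset.mul_sum, ← Finset.sum_sub_distrib, ← Finset.sum_add_distrib]
        exact Finset.sum_congr rfl fun ω _ => by ring
    _ = _ := by rw [hf, hg, hsum]; simp only [pExp]; ring

end Covariance

section Indicator

variable {p : Ω → ℝ} {k : ℕ}

lemma pCov_pInd_pInd (hsum : ∑ ω, p ω = 1) (X : Ω → Fin k) (a b : Fin k) :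
    pCov p (pInd X a) (pInd X b) =
      (if a = b then pExp p (pInd X a) else 0) - pExp p (pInd X a) * pExp p (pInd X b) := by
  have hmul : (fun ω => pInd X a ω * pInd X b ω) = if a = b then pInd X a else 0 := by
    funext ω
    by_cases hab : a = b
    · subst hab; by_cases h : X ω = a <;> simp [pInd, h]
    · by_cases h : X ω = a <;> simp [pInd, hab, h]
  rw [pCov_eq_pExp_mul_sub hsum, hmul]
  split_ifs <;> simp [pExp]

lemma pVar_pInd (hsum : ∑ ω, p ω = 1) (X : Ω → Fin k) (a : Fin k) :
    pVar p (pInd X a) = pExp p (pInd X a) * (1 - pExp p (pInd X a)) := by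
  rw [← pCov_self, pCov_pInd_pInd hsum, if_pos rfl]
  ring

lemma sum_pExp_pInd (hsum : ∑ ω, p ω = 1) (X : Ω → Fin k) : ∑ a, pExp p (pInd X a) = 1 := by
  simp only [pExp, pInd]
  rw [Finset.sum_comm]
  simp [hsum]

lemma sum_pVar_pInd_le_one (hsum : ∑ ω, p ω = 1) (X : Ω → Fin k) :
    ∑ a, pVar p (pInd X a) ≤ 1 :=
  calc ∑ a, pVar p (pInd X a) ≤ ∑ a, pExp p (pInd X a) :=
        Finset.sum_le_sum fun a _ => by
          rw [pVar_pInd hsum]; nlinarith [sq_nonneg (pExp p (pInd X a))]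
    _ = 1 := sum_pExp_pInd hsum X

end Indicator

section EuclideanVectors

variable {ι : Type*} [Fintype ι]

def tensorSq (x : EuclideanSpace ℝ ι) : EuclideanSpace ℝ (ι × ι) :=
  WithLp.toLp 2 fun q => x q.1 * x q.2

lemma inner_tensorSq (x y : EuclideanSpace ℝ ι) : ⟪tensorSq x, tensorSq y⟫ = ⟪x, y⟫ ^ 2 := by
  simp only [tensorSq, PiLp.inner_apply, Fintype.sum_prod_type, sq, Finset.sum_mul_sum,
    RCLike.inner_apply, conj_trivial]
  exact Finset.sum_congr rfl fun i _ => Finset.sum_congr rfl fun j _ => by ring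

open MatrixOrder in
lemma exists_euclideanSpace_inner_eq {E : Type*} [NormedAddCommGroup E] [InnerProductSpace ℝ E]
    (w : ι → E) : ∃ v : ι → EuclideanSpace ℝ ι, ∀ i j, ⟪v i, v j⟫ = ⟪w i, w j⟫ := by
  classical
  obtain ⟨B, hB⟩ := CStarAlgebra.nonneg_iff_eq_star_mul_self.mp
    (Matrix.nonneg_iff_posSemidef.mpr (Matrix.posSemidef_gram ℝ w))
  refine ⟨fun i => WithLp.toLp 2 fun m => B m i, fun i j => ?_⟩
  rw [← Matrix.gram_apply (𝕜 := ℝ) w, hB]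
  simp [Matrix.mul_apply, EuclideanSpace.inner_toLp_toLp, dotProduct, mul_comm]

end EuclideanVectors

section Inequalities

variable {ι : Type*} [Fintype ι]

lemma inv_sqrt_mul_sqrt_le {x y : ℝ} (hx : 0 < x) (hy : 0 < y) :
    (√x * √y)⁻¹ ≤ 1 / 2 * (1 / x + 1 / y) := by
  have h := two_mul_le_add_sq (√x)⁻¹ (√y)⁻¹
  rw [inv_pow, inv_pow, Real.sq_sqrt hx.le, Real.sq_sqrt hy.le] at h
  rw [mul_inv]
  linarith [one_div x, one_div y]

lemma sum_abs_pow_four_le {c σ τ : ι → ℝ} (hσ : ∀ a, 0 < σ a) (hτ : ∀ a, 0 < τ a)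
    (hσ1 : ∑ a, σ a ^ 2 ≤ 1) (hτ1 : ∑ a, τ a ^ 2 ≤ 1) (hc : ∀ a, |c a| ≤ σ a * τ a) :
    (∑ a, |c a|) ^ 4 ≤ ∑ a, c a ^ 2 / (σ a * τ a) := by
  have hστ : ∀ a, 0 < σ a * τ a := fun a => mul_pos (hσ a) (hτ a)
  have hG0 : 0 ≤ ∑ a, σ a * τ a := Finset.sum_nonneg fun a _ => (hστ a).le
  have hG1 : ∑ a, σ a * τ a ≤ 1 := by
    have := Finset.sum_mul_sq_le_sq_mul_sq Finset.univ σ τ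
    nlinarith [Finset.sum_nonneg fun a (_ : a ∈ Finset.univ) => sq_nonneg (σ a)]
  have hS0 : 0 ≤ ∑ a, |c a| := Finset.sum_nonneg fun a _ => abs_nonneg _
  have hS1 : ∑ a, |c a| ≤ 1 := (Finset.sum_le_sum fun a _ => hc a).trans hG1
  have hQ : 0 ≤ ∑ a, c a ^ 2 / (σ a * τ a) :=
    Finset.sum_nonneg fun a _ => div_nonneg (sq_nonneg _) (hστ a).le
  have hS2 : (∑ a, |c a|) ^ 2 ≤ (∑ a, c a ^ 2 / (σ a * τ a)) * ∑ a, σ a * τ a :=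
    Finset.sum_sq_le_sum_mul_sum_of_sq_le_mul _
      (fun a _ => div_nonneg (sq_nonneg _) (hστ a).le) (fun a _ => (hστ a).le)
      fun a _ => by rw [sq_abs, div_mul_cancel₀ _ (hστ a).ne']
  calc (∑ a, |c a|) ^ 4 ≤ (∑ a, |c a|) ^ 2 := by
        rw [show (4 : ℕ) = 2 * 2 from rfl, pow_mul]
        exact pow_le_of_le_one (sq_nonneg _) (pow_le_one₀ hS0 hS1) two_ne_zero
    _ ≤ ∑ a, c a ^ 2 / (σ a * τ a) := hS2.trans (mul_le_of_le_one_right hQ hG1)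

lemma sum_categoricalCov_sq_div_le_one [DecidableEq ι] {μ : ι → ℝ} (h0 : ∀ a, 0 < μ a)
    (h1 : ∀ a, μ a < 1) (hs : ∑ a, μ a = 1) :
    ∑ a, ∑ b, ((if a = b then μ a else 0) - μ a * μ b) ^ 2 /
      (√(μ a * (1 - μ a)) * √(μ b * (1 - μ b))) ≤ 1 := by
  set σ : ι → ℝ := fun a => √(μ a * (1 - μ a))
  have hvar : ∀ a, 0 < μ a * (1 - μ a) := fun a => mul_pos (h0 a) (by linarith [h1 a])
  have hσ : ∀ a, 0 < σ a := fun a => Real.sqrt_pos.2 (hvar a)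
  have hσ2 : ∀ a, σ a ^ 2 = μ a * (1 - μ a) := fun a => Real.sq_sqrt (hvar a).le
  set t : ι → ℝ := fun a => μ a ^ 2 / σ a
  have hterm : ∀ a b, ((if a = b then μ a else 0) - μ a * μ b) ^ 2 / (σ a * σ b) =
      t a * t b + if a = b then σ a ^ 2 - t a ^ 2 else 0 := by
    intro a b
    by_cases hab : a = b
    · subst hab
      have : (μ a - μ a * μ a) ^ 2 = (σ a * σ a) * σ a ^ 2 := by
        linear_combination (-(σ a ^ 2 + μ a * (1 - μ a))) * hσ2 a
      rw [if_pos rfl, if_pos rfl, this, mul_div_cancel_left₀ _ (mul_pos (hσ a) (hσ a)).ne']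
      ring
    · simp only [hab, if_false, t, div_mul_div_comm]
      ring
  have ht2 : ∀ a, t a ^ 2 = μ a ^ 3 / (1 - μ a) := fun a => by
    have : 1 - μ a ≠ 0 := by linarith [h1 a]
    rw [div_pow, hσ2]
    field_simp
  have hmain : (∑ a, t a) ^ 2 ≤ ∑ a, t a ^ 2 / μ a := by
    simpa [hs] using Finset.sq_sum_div_le_sum_sq_div Finset.univ t fun a _ => h0 a
  calc ∑ a, ∑ b, ((if a = b then μ a else 0) - μ a * μ b) ^ 2 / (σ a * σ b)
      = (∑ a, t a) ^ 2 + ∑ a, (σ a ^ 2 - t a ^ 2) := by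
        rw [Finset.sum_congr rfl fun a _ => Finset.sum_congr rfl fun b _ => hterm a b, sq,
          Finset.sum_mul_sum, ← Finset.sum_add_distrib]
        simp only [Finset.sum_add_distrib, Finset.sum_ite_eq, Finset.mem_univ, if_true]
    _ ≤ ∑ a, (t a ^ 2 / μ a + (σ a ^ 2 - t a ^ 2)) := by
        rw [Finset.sum_add_distrib]; linarith
    _ = ∑ a, μ a := Finset.sum_congr rfl fun a _ => by
        have : 1 - μ a ≠ 0 := by linarith [h1 a]
        rw [ht2, hσ2]
        field_simp
        ring
    _ = 1 := hs

end Inequalities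

section CovTensor

variable {p : Ω → ℝ} {k : ℕ}

variable (p) in
def covTensor (X : Ω → Fin k) : EuclideanSpace ℝ (Ω × Ω) :=
  ∑ a, (√(pVar p (pInd X a)))⁻¹ • tensorSq (centeredVec p (pInd X a))

lemma inner_covTensor (hp : ∀ ω, 0 ≤ p ω) (X Y : Ω → Fin k) :
    ⟪covTensor p X, covTensor p Y⟫ = ∑ a, ∑ b, pCov p (pInd X a) (pInd Y b) ^ 2 /
      (√(pVar p (pInd X a)) * √(pVar p (pInd Y b))) := by
  rw [covTensor, covTensor, sum_inner]
  simp only [inner_sum, real_inner_smul_left, real_inner_smul_right,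
    inner_tensorSq, inner_centeredVec hp]
  refine Finset.sum_congr rfl fun a _ => Finset.sum_congr rfl fun b _ => ?_
  rw [div_eq_mul_inv, mul_inv]
  ring

lemma inner_covTensor_self_le_one (hp : ∀ ω, 0 ≤ p ω) (hsum : ∑ ω, p ω = 1) (X : Ω → Fin k)
    (hvar : ∀ a, 0 < pVar p (pInd X a)) : ⟪covTensor p X, covTensor p X⟫ ≤ 1 := by
  have hμ : ∀ a, 0 < pExp p (pInd X a) ∧ pExp p (pInd X a) < 1 := fun a => by
    have hpos := hvar a
    rw [pVar_pInd hsum] at hpos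
    constructor <;> nlinarith
  rw [inner_covTensor hp]
  simp only [pCov_pInd_pInd hsum, pVar_pInd hsum]
  exact sum_categoricalCov_sq_div_le_one (fun a => (hμ a).1) (fun a => (hμ a).2)
    (sum_pExp_pInd hsum X)

lemma pow_four_le_inner_covTensor (hp : ∀ ω, 0 ≤ p ω) (hsum : ∑ ω, p ω = 1)
    (X Y : Ω → Fin k) (hX : ∀ a, 0 < pVar p (pInd X a)) (hY : ∀ b, 0 < pVar p (pInd Y b))
    (π : Equiv.Perm (Fin k)) :
    (∑ a, |pCov p (pInd X a) (pInd Y (π a))|) ^ 4 ≤ ⟪covTensor p X, covTensor p Y⟫ := by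
  have hsq : ∀ Z : Ω → Fin k, (∀ a, 0 < pVar p (pInd Z a)) →
      ∑ a, √(pVar p (pInd Z a)) ^ 2 ≤ 1 := fun Z hZ => by
    simpa only [Real.sq_sqrt (hZ _).le] using sum_pVar_pInd_le_one hsum Z
  rw [inner_covTensor hp]
  calc (∑ a, |pCov p (pInd X a) (pInd Y (π a))|) ^ 4
      ≤ ∑ a, pCov p (pInd X a) (pInd Y (π a)) ^ 2 /
          (√(pVar p (pInd X a)) * √(pVar p (pInd Y (π a)))) :=
        sum_abs_pow_four_le (fun a => Real.sqrt_pos.2 (hX a)) (fun a => Real.sqrt_pos.2 (hY _))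
          (hsq X hX) ((Equiv.sum_comp π fun b => √(pVar p (pInd Y b)) ^ 2).le.trans (hsq Y hY))
          fun a => abs_pCov_le hp _ _
    _ ≤ _ := Finset.sum_le_sum fun a _ =>
        Finset.single_le_sum (f := fun b => pCov p (pInd X a) (pInd Y b) ^ 2 /
            (√(pVar p (pInd X a)) * √(pVar p (pInd Y b))))
          (fun b _ => by positivity) (Finset.mem_univ (π a))

lemma inner_covTensor_le (hp : ∀ ω, 0 ≤ p ω) (X Y : Ω → Fin k)
    (hX : ∀ a, 0 < pVar p (pInd X a)) (hY : ∀ b, 0 < pVar p (pInd Y b)) :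
    ⟪covTensor p X, covTensor p Y⟫ ≤ ∑ a, ∑ b, 1 / 2 * (1 / pVar p (pInd X a) +
      1 / pVar p (pInd Y b)) * pCov p (pInd X a) (pInd Y b) ^ 2 := by
  rw [inner_covTensor hp]
  gcongr with a _ b _
  rw [div_eq_inv_mul]
  exact mul_le_mul_of_nonneg_right (inv_sqrt_mul_sqrt_le (hX a) (hY b)) (sq_nonneg _)

end CovTensor

/-- **Unique-Games tensoring trick.** For jointly distributed `[k]`-valued
random variables `X₁, …, Xₙ` with `Var X_{ia} > 0`, there are vectors `v₁, …, vₙ` in the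
unit ball such that for all `i, j` and every permutation `π` of `[k]`:
`(Σ_a |Cov(X_{ia}, X_{j,π(a)})|)⁴ ≤ ⟨v_i, v_j⟩
   ≤ Σ_{a,b} ½(1/Var X_{ia} + 1/Var X_{jb}) Cov(X_{ia}, X_{jb})²`. -/
theorem stmt_6 {Ω : Type*} [Fintype Ω] (p : Ω → ℝ)
    (hp : ∀ ω, 0 ≤ p ω) (hsum : ∑ ω, p ω = 1)
    (n k : ℕ) (X : Fin n → Ω → Fin k)
    (hvar : ∀ i a, 0 < pVar p (pInd (X i) a)) :
    ∃ v : Fin n → EuclideanSpace ℝ (Fin n),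
      (∀ i, ‖v i‖ ≤ 1) ∧
      ∀ (i j : Fin n) (π : Equiv.Perm (Fin k)),
        (∑ a : Fin k, |pCov p (pInd (X i) a) (pInd (X j) (π a))|) ^ 4 ≤
          ⟪v i, v j⟫ ∧
        (⟪v i, v j⟫ : ℝ) ≤
          ∑ a : Fin k, ∑ b : Fin k,
            (1 / 2) * (1 / pVar p (pInd (X i) a) + 1 / pVar p (pInd (X j) b)) *
              pCov p (pInd (X i) a) (pInd (X j) b) ^ 2 := by
  obtain ⟨v, hv⟩ := exists_euclideanSpace_inner_eq fun i => covTensor p (X i)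
  refine ⟨v, fun i => ?_, fun i j π => ?_⟩
  · have h := inner_covTensor_self_le_one hp hsum (X i) (hvar i)
    rw [← hv, real_inner_self_eq_norm_sq] at h
    exact (sq_le_one_iff₀ (norm_nonneg _)).1 h
  · rw [hv]
    exact ⟨pow_four_le_inner_covTensor hp hsum (X i) (X j) (hvar i) (hvar j) π,
      inner_covTensor_le hp (X i) (X j) (hvar i) (hvar j)⟩
end
end

section
/- Let X₁, …, X_r be jointly distributed random variables with values in [k] = {1, …, k} on a finite probability space, and suppose there exist vectors v_{ia} (for i ∈ [r], a ∈ [k]) in a real inner product space such that ⟨v_{ia}, v_{jb}⟩ = E[X_{ia}·X_{jb}] for all i, j ∈ [r] and a, b ∈ [k]. Let S ⊆ [r] and let P_S denote the orthogonal projection onto the orthogonal complement of the span of {v_{jb} : j ∈ S, b ∈ [k]}. Then: (1) for every i ∈ [r] and a ∈ [k], E_{{X_S}} Var[X_{ia} | X_S] ≤ ‖P_S v_{ia}‖²; and (2) for every i ∈ [r], E_{{X_S}} Var[X_i | X_S] ≤ Σ_{a∈[k]} ‖P_S v_{ia}‖². -/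
/-!
Write `v_{ia} - w_{ia} = ∑ c_{jb} v_{jb}` with `j ∈ S`. Because the Gram matrix of the `v`'s is
the second-moment matrix of the indicators, `∑ c_q v_q ↦ ∑ c_q X_q` is an isometry into `L²(p)`,
so `‖w_{ia}‖² = E[(X_{ia} - g)²]` for `g = ∑ c_{jb} X_{jb}`, a function of `X_S`. Conditional
expectation given `X_S` is the best `L²` approximation of `X_{ia}` by functions of `X_S`, whence
`E_{X_S} Var[X_{ia} | X_S] ≤ E[(X_{ia} - g)²]`; summing over `a` gives the second bound.
-/

open Finset RealInnerProductSpace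

noncomputable section

variable {Ω : Type*} [Fintype Ω]

/-- Probability of the event `E` under the weight function `p`. -/
def pProb (p : Ω → ℝ) (E : Ω → Prop) [DecidablePred E] : ℝ := ∑ ω, if E ω then p ω else 0

/-- The measure `p` conditioned on the event `E`. -/
def pCond (p : Ω → ℝ) (E : Ω → Prop) [DecidablePred E] : Ω → ℝ :=
  fun ω => if E ω then p ω / pProb p E else 0

/-- `E_{{Y}} Var[f | Y]`: the expectation over the distribution of `Y` of the variance of
the real random variable `f` conditioned on the value of `Y`. -/
def pCondVar (p : Ω → ℝ) (f : Ω → ℝ) {β : Type*} [DecidableEq β] (Y : Ω → β) : ℝ :=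
  ∑ y ∈ Finset.univ.image Y,
    if 0 < pProb p (fun ω => Y ω = y)
    then pProb p (fun ω => Y ω = y) * pVar (pCond p (fun ω => Y ω = y)) f
    else 0

/-- `E_{{Y}} Var[X | Y]` for a `[k]`-valued random variable `X`, where
`Var X = Σ_a Var X_a`. -/
def pCondVarK (p : Ω → ℝ) {k : ℕ} (X : Ω → Fin k) {β : Type*} [DecidableEq β] (Y : Ω → β) : ℝ :=
  ∑ a, pCondVar p (pInd X a) Y

theorem pExp_sq_sub_eq (q f : Ω → ℝ) (hq : ∑ ω, q ω = 1) (c : ℝ) :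
    pExp q (fun ω => (f ω - c) ^ 2) = pVar q f + (pExp q f - c) ^ 2 := by
  set m := pExp q f
  have hm : ∑ ω, q ω * f ω = m := rfl
  calc ∑ ω, q ω * (f ω - c) ^ 2
      = ∑ ω, (q ω * (f ω - m) ^ 2 + (m - c) ^ 2 * q ω + 2 * (m - c) * (q ω * f ω - m * q ω)) :=
        sum_congr rfl fun ω _ => by ring
    _ = pVar q f + (pExp q f - c) ^ 2 := by
        rw [sum_add_distrib, sum_add_distrib, ← mul_sum, ← mul_sum, sum_sub_distrib, ← mul_sum,
          hq, hm]
        simp [pVar, pExp, m]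

theorem pVar_le_pExp_sq_sub (q f : Ω → ℝ) (hq : ∑ ω, q ω = 1) (c : ℝ) :
    pVar q f ≤ pExp q (fun ω => (f ω - c) ^ 2) := by
  rw [pExp_sq_sub_eq q f hq c]
  exact le_add_of_nonneg_right (sq_nonneg _)

theorem pProb_mul_pExp_pCond (p : Ω → ℝ) (E : Ω → Prop) [DecidablePred E]
    (hE : pProb p E ≠ 0) (h : Ω → ℝ) :
    pProb p E * pExp (pCond p E) h = ∑ ω, if E ω then p ω * h ω else 0 := by
  rw [pExp, mul_sum]
  refine sum_congr rfl fun ω _ => ?_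
  unfold pCond
  split_ifs
  · field_simp
  · simp

theorem sum_pCond (p : Ω → ℝ) (E : Ω → Prop) [DecidablePred E] (hE : pProb p E ≠ 0) :
    ∑ ω, pCond p E ω = 1 := by
  have h := pProb_mul_pExp_pCond p E hE 1
  simp only [pExp, Pi.one_apply, mul_one] at h
  exact (mul_eq_left₀ hE).1 h

theorem ite_pProb_mul_pVar_pCond_le (p : Ω → ℝ) (hp : ∀ ω, 0 ≤ p ω) (E : Ω → Prop)
    [DecidablePred E] (f : Ω → ℝ) (c : ℝ) :
    (if 0 < pProb p E then pProb p E * pVar (pCond p E) f else 0) ≤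
      ∑ ω, if E ω then p ω * (f ω - c) ^ 2 else 0 := by
  split_ifs with hE
  · rw [← pProb_mul_pExp_pCond p E hE.ne' (fun ω => (f ω - c) ^ 2)]
    exact mul_le_mul_of_nonneg_left
      (pVar_le_pExp_sq_sub _ f (sum_pCond p E hE.ne') c) hE.le
  · exact sum_nonneg fun ω _ => by
      split_ifs
      exacts [mul_nonneg (hp ω) (sq_nonneg _), le_rfl]

theorem pCondVar_le_pExp_sq_sub (p : Ω → ℝ) (hp : ∀ ω, 0 ≤ p ω) {β : Type*} [DecidableEq β]
    (Y : Ω → β) (f g : Ω → ℝ) (hg : ∀ ω ω', Y ω = Y ω' → g ω = g ω') :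
    pCondVar p f Y ≤ pExp p (fun ω => (f ω - g ω) ^ 2) :=
  calc pCondVar p f Y
      ≤ ∑ y ∈ univ.image Y, ∑ ω, if Y ω = y then p ω * (f ω - g ω) ^ 2 else 0 := by
        refine sum_le_sum fun y hy => ?_
        obtain ⟨ω₀, -, rfl⟩ := mem_image.1 hy
        refine (ite_pProb_mul_pVar_pCond_le p hp _ f (g ω₀)).trans_eq
          (sum_congr rfl fun ω _ => ?_)
        split_ifs with hω
        · rw [hg ω ω₀ hω]
        · rfl
    _ = pExp p (fun ω => (f ω - g ω) ^ 2) := by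
        simp_rw [← sum_filter]
        exact sum_fiberwise_of_maps_to (fun ω _ => mem_image_of_mem Y (mem_univ ω)) _

theorem linearCombination_apply_eq_of_supported {ι α : Type*} (F : ι → α → ℝ) {s : Set ι}
    {l : ι →₀ ℝ} (hl : l ∈ Finsupp.supported ℝ ℝ s) {ω ω' : α}
    (hF : ∀ i ∈ s, F i ω = F i ω') :
    Finsupp.linearCombination ℝ F l ω = Finsupp.linearCombination ℝ F l ω' := by
  simp only [Finsupp.linearCombination_apply, Finsupp.sum, Finset.sum_apply, Pi.smul_apply,
    smul_eq_mul]
  exact sum_congr rfl fun i hi => by rw [hF i ((Finsupp.mem_supported ℝ l).1 hl hi)]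

theorem norm_linearCombination_sq {H : Type*} [NormedAddCommGroup H] [InnerProductSpace ℝ H]
    (p : Ω → ℝ) {ι : Type*} (V : ι → H) (F : ι → Ω → ℝ)
    (hgram : ∀ i j, ⟪V i, V j⟫ = pExp p (fun ω => F i ω * F j ω)) (l : ι →₀ ℝ) :
    ‖Finsupp.linearCombination ℝ V l‖ ^ 2 =
      pExp p (fun ω => Finsupp.linearCombination ℝ F l ω ^ 2) := by
  rw [← real_inner_self_eq_norm_sq]
  simp only [Finsupp.linearCombination_apply, Finsupp.sum, sum_inner, inner_sum,
    real_inner_smul_left, real_inner_smul_right, hgram, pExp, Finset.sum_apply, Pi.smul_apply,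
    smul_eq_mul, sq, mul_sum, sum_mul]
  conv_rhs => rw [sum_comm]
  refine sum_congr rfl fun i _ => ?_
  conv_rhs => rw [sum_comm]
  exact sum_congr rfl fun j _ => sum_congr rfl fun ω _ => by ring

theorem pCondVar_le_norm_sq_of_sub_mem_span {H : Type*} [NormedAddCommGroup H]
    [InnerProductSpace ℝ H] (p : Ω → ℝ) (hp : ∀ ω, 0 ≤ p ω) {ι : Type*} (V : ι → H)
    (F : ι → Ω → ℝ) (hgram : ∀ i j, ⟪V i, V j⟫ = pExp p (fun ω => F i ω * F j ω))
    {β : Type*} [DecidableEq β] (Y : Ω → β) (s : Set ι)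
    (hs : ∀ i ∈ s, ∀ ω ω', Y ω = Y ω' → F i ω = F i ω') (i₀ : ι) (w : H)
    (hw : V i₀ - w ∈ Submodule.span ℝ (V '' s)) :
    pCondVar p (F i₀) Y ≤ ‖w‖ ^ 2 := by
  obtain ⟨l, hls, hl⟩ := (Finsupp.mem_span_image_iff_linearCombination ℝ).1 hw
  have hw_eq : w = Finsupp.linearCombination ℝ V (Finsupp.single i₀ 1 - l) := by
    rw [map_sub, hl, Finsupp.linearCombination_single, one_smul, sub_sub_cancel]
  rw [hw_eq, norm_linearCombination_sq p V F hgram, map_sub, Finsupp.linearCombination_single,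
    one_smul]
  exact pCondVar_le_pExp_sq_sub p hp Y _ _ fun ω ω' hY =>
    linearCombination_apply_eq_of_supported F hls fun i hi => hs i hi ω ω' hY

theorem stmt_13_general {Ω : Type*} [Fintype Ω] (p : Ω → ℝ)
    (hp : ∀ ω, 0 ≤ p ω)
    (r k : ℕ) (X : Fin r → Ω → Fin k)
    {H : Type*} [NormedAddCommGroup H] [InnerProductSpace ℝ H]
    (v : Fin r → Fin k → H)
    (hgram : ∀ i j : Fin r, ∀ a b : Fin k,
      (⟪v i a, v j b⟫ : ℝ) = pExp p (fun ω => pInd (X i) a ω * pInd (X j) b ω))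
    (S : Finset (Fin r))
    (w : Fin r → Fin k → H)
    (hw_span : ∀ i a,
      v i a - w i a ∈ Submodule.span ℝ {x : H | ∃ j ∈ S, ∃ b : Fin k, x = v j b}) :
    (∀ (i : Fin r) (a : Fin k),
        pCondVar p (pInd (X i) a) (fun ω => fun s : S => X s ω) ≤ ‖w i a‖ ^ 2) ∧
      ∀ i : Fin r,
        pCondVarK p (X i) (fun ω => fun s : S => X s ω) ≤ ∑ a, ‖w i a‖ ^ 2 := by
  have hspan : {x : H | ∃ j ∈ S, ∃ b : Fin k, x = v j b} =
      (fun q : Fin r × Fin k => v q.1 q.2) '' {q | q.1 ∈ S} := by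
    ext x
    constructor
    · rintro ⟨j, hj, b, rfl⟩
      exact ⟨(j, b), hj, rfl⟩
    · rintro ⟨⟨j, b⟩, hj, rfl⟩
      exact ⟨j, hj, b, rfl⟩
  have hX_S : ∀ q ∈ {q : Fin r × Fin k | q.1 ∈ S}, ∀ ω ω',
      (fun s : S => X s ω) = (fun s : S => X s ω') →
        pInd (X q.1) q.2 ω = pInd (X q.1) q.2 ω' := fun q hq ω ω' hY => by
    simp only [pInd, congrFun hY ⟨q.1, hq⟩]
  have hone : ∀ i a,
      pCondVar p (pInd (X i) a) (fun ω => fun s : S => X s ω) ≤ ‖w i a‖ ^ 2 := fun i a =>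
    pCondVar_le_norm_sq_of_sub_mem_span p hp (fun q : Fin r × Fin k => v q.1 q.2)
      (fun q : Fin r × Fin k => pInd (X q.1) q.2) (fun q q' => hgram q.1 q'.1 q.2 q'.2)
      (fun ω => fun s : S => X s ω) _ hX_S (i, a) (w i a) (hspan ▸ hw_span i a)
  exact ⟨hone, fun i => sum_le_sum fun a _ => hone i a⟩

/-- **conditional variance vs. projections of SDP vectors.** Suppose the
vectors `v_{ia}` realize the second moments of the indicators, i.e.
`⟨v_{ia}, v_{jb}⟩ = E[X_{ia} X_{jb}]`. Let `S ⊆ [r]` and let `w_{ia} := P_S v_{ia}` be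
the orthogonal projection of `v_{ia}` onto the orthogonal complement of the span of
`{v_{jb} : j ∈ S, b ∈ [k]}` (characterized by `w_{ia} ⊥ span` and `v_{ia} − w_{ia} ∈ span`).
Then `E_{{X_S}} Var[X_{ia} | X_S] ≤ ‖w_{ia}‖²` and
`E_{{X_S}} Var[X_i | X_S] ≤ Σ_a ‖w_{ia}‖²`. -/
theorem stmt_13 {Ω : Type*} [Fintype Ω] (p : Ω → ℝ)
    (hp : ∀ ω, 0 ≤ p ω) (hsum : ∑ ω, p ω = 1)
    (r k : ℕ) (X : Fin r → Ω → Fin k)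
    {H : Type*} [NormedAddCommGroup H] [InnerProductSpace ℝ H]
    (v : Fin r → Fin k → H)
    (hgram : ∀ i j : Fin r, ∀ a b : Fin k,
      (⟪v i a, v j b⟫ : ℝ) = pExp p (fun ω => pInd (X i) a ω * pInd (X j) b ω))
    (S : Finset (Fin r))
    (w : Fin r → Fin k → H)
    (hw_perp : ∀ i a,
      w i a ∈ (Submodule.span ℝ {x : H | ∃ j ∈ S, ∃ b : Fin k, x = v j b})ᗮ)
    (hw_span : ∀ i a,
      v i a - w i a ∈ Submodule.span ℝ {x : H | ∃ j ∈ S, ∃ b : Fin k, x = v j b}) :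
    (∀ (i : Fin r) (a : Fin k),
        pCondVar p (pInd (X i) a) (fun ω => fun s : S => X s ω) ≤ ‖w i a‖ ^ 2) ∧
      ∀ i : Fin r,
        pCondVarK p (X i) (fun ω => fun s : S => X s ω) ≤ ∑ a, ‖w i a‖ ^ 2 :=
  stmt_13_general p hp r k X v hgram S w hw_span

end
end
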